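/- arXiv:2508.10842 — 6 statements merged into one kernel-verified Lean document; each statement's English description precedes it below -/
import Mathlib

section
/- For every integer n ≥ 3, (1 / C(n+1, 4)) · Σ_{0 ≤ i < j < k < l ≤ n} arcsin( (k − j) / (√(k − i) · √(l − j)) ) = π/6, where the sum ranges over all quadruples of integers 0 ≤ i < j < k < l ≤ n and C(n+1, 4) is the binomial coefficient. -/
/-!
Write the gaps of `i < j < k < l` as `a = j - i`, `b = k - j`, `c = l - k`, so that the summand is
`arcsin (b / √((a + b) (b + c)))`. With `t = √(ab + bc + ca)` one has `(a + b) (b + c) = b² + t²`,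
so the summand equals `arctan (b / t)`; since `(a/t)(b/t) + (b/t)(c/t) + (c/t)(a/t) = 1`, the three
summands obtained by cycling the gaps add up to `π / 2`. Cycling the gaps permutes the `C(n+1, 4)`
quadruples in `{0, …, n}`, so the whole sum is `C(n+1, 4) · π / 6`.
-/
open Finset Real

theorem Nat.sum_range_choose_eq_choose_succ (m r : ℕ) :
    ∑ x ∈ range m, x.choose r = m.choose (r + 1) := by
  induction m with
  | zero => simp
  | succ m ih => rw [sum_range_succ, ih, Nat.choose_succ_succ', add_comm]

def increasingQuadruples (m : ℕ) : Finset (ℕ × ℕ × ℕ × ℕ) :=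
  (range m ×ˢ range m ×ˢ range m ×ˢ range m).filter
    fun q => q.1 < q.2.1 ∧ q.2.1 < q.2.2.1 ∧ q.2.2.1 < q.2.2.2

theorem mem_increasingQuadruples {m i j k l : ℕ} :
    (i, j, k, l) ∈ increasingQuadruples m ↔ i < j ∧ j < k ∧ k < l ∧ l < m := by
  simp only [increasingQuadruples, mem_filter, mem_product, mem_range]
  omega

theorem card_increasingQuadruples (m : ℕ) : #(increasingQuadruples m) = m.choose 4 := by
  have hsigma : #(increasingQuadruples m) =
      #((range m).sigma fun l => (range l).sigma fun k => (range k).sigma fun j => range j) := by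
    refine card_nbij' (fun q => ⟨q.2.2.2, q.2.2.1, q.2.1, q.1⟩)
      (fun s => (s.2.2.2, s.2.2.1, s.2.1, s.1)) ?_ ?_ ?_ ?_
    · rintro ⟨i, j, k, l⟩ h
      simp only [mem_coe, mem_increasingQuadruples, mem_sigma, mem_range] at h ⊢
      omega
    · rintro ⟨l, k, j, i⟩ h
      simp only [mem_coe, mem_increasingQuadruples, mem_sigma, mem_range] at h ⊢
      omega
    · intro q _; rfl
    · intro s _; rfl
  simp only [hsigma, card_sigma, card_range]
  calc ∑ l ∈ range m, ∑ k ∈ range l, ∑ j ∈ range k, j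
      = ∑ l ∈ range m, ∑ k ∈ range l, ∑ j ∈ range k, j.choose 1 := by
        simp only [Nat.choose_one_right]
    _ = m.choose 4 := by simp only [Nat.sum_range_choose_eq_choose_succ]

theorem sum_increasingQuadruples {M : Type*} [AddCommMonoid M] (m : ℕ)
    (f : ℕ × ℕ × ℕ × ℕ → M) :
    ∑ q ∈ increasingQuadruples m, f q =
      ∑ i ∈ range m, ∑ j ∈ range m, ∑ k ∈ range m, ∑ l ∈ range m,
        if i < j ∧ j < k ∧ k < l then f (i, j, k, l) else 0 := by
  simp only [increasingQuadruples, sum_filter, sum_product]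

theorem arctan_add_arctan_add_arctan_eq_pi_div_two {x y z : ℝ} (hx : 0 < x) (hy : 0 < y)
    (hz : 0 < z) (h : x * y + y * z + z * x = 1) :
    arctan x + arctan y + arctan z = π / 2 := by
  have hxy : 1 - x * y = z * (x + y) := by linarith
  have hlt : x * y < 1 := by nlinarith [mul_pos hz (add_pos hx hy)]
  rw [arctan_add hlt, hxy, div_mul_cancel_right₀ (add_pos hx hy).ne', arctan_inv_of_pos hz]
  ring

theorem arcsin_div_sqrt_mul_sqrt_eq_arctan {a b c : ℝ} (ha : 0 < a) (hb : 0 ≤ b) (hc : 0 < c) :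
    arcsin (b / (√(a + b) * √(b + c))) = arctan (b / √(a * b + b * c + c * a)) := by
  have ht : 0 < a * b + b * c + c * a := by positivity
  have hsq := sq_sqrt ht.le
  set t := √(a * b + b * c + c * a)
  have htpos : 0 < t := sqrt_pos.2 ht
  have hroot : √(1 + (b / t) ^ 2) = √(a + b) * √(b + c) / t := by
    rw [sqrt_eq_iff_eq_sq (by positivity) (by positivity), div_pow (√(a + b) * √(b + c)), mul_pow,
      sq_sqrt (by positivity : 0 ≤ a + b), sq_sqrt (by positivity : 0 ≤ b + c)]
    field_simp
    linear_combination hsq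
  rw [arctan_eq_arcsin, hroot, div_div_div_cancel_right₀ htpos.ne']

theorem arcsin_add_arcsin_add_arcsin_cyclic {a b c : ℝ} (ha : 0 < a) (hb : 0 < b) (hc : 0 < c) :
    arcsin (b / (√(a + b) * √(b + c))) + arcsin (c / (√(b + c) * √(c + a)))
      + arcsin (a / (√(c + a) * √(a + b))) = π / 2 := by
  rw [arcsin_div_sqrt_mul_sqrt_eq_arctan ha hb.le hc,
    arcsin_div_sqrt_mul_sqrt_eq_arctan hb hc.le ha, arcsin_div_sqrt_mul_sqrt_eq_arctan hc ha.le hb,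
    show b * c + c * a + a * b = a * b + b * c + c * a by ring,
    show c * a + a * b + b * c = a * b + b * c + c * a by ring]
  have ht : 0 < a * b + b * c + c * a := by positivity
  have hsq := sq_sqrt ht.le
  set t := √(a * b + b * c + c * a)
  have htpos : 0 < t := sqrt_pos.2 ht
  apply arctan_add_arctan_add_arctan_eq_pi_div_two (by positivity) (by positivity) (by positivity)
  field_simp
  linarith

noncomputable def quadrupleArcsin (q : ℕ × ℕ × ℕ × ℕ) : ℝ :=
  arcsin (((q.2.2.1 : ℝ) - q.2.1) / (√((q.2.2.1 : ℝ) - q.1) * √((q.2.2.2 : ℝ) - q.2.1)))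

/-- On `i < j < k < l`, turns the gaps `(j - i, k - j, l - k)` into `(k - j, l - k, j - i)`,
keeping `i` and `l`. -/
def cycleGaps (q : ℕ × ℕ × ℕ × ℕ) : ℕ × ℕ × ℕ × ℕ :=
  (q.1, q.1 + q.2.2.1 - q.2.1, q.1 + q.2.2.2 - q.2.1, q.2.2.2)

theorem cycleGaps_mem_increasingQuadruples {m : ℕ} {q : ℕ × ℕ × ℕ × ℕ}
    (hq : q ∈ increasingQuadruples m) : cycleGaps q ∈ increasingQuadruples m := by
  obtain ⟨i, j, k, l⟩ := q
  rw [mem_increasingQuadruples] at hq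
  simp only [cycleGaps, mem_increasingQuadruples]
  omega

theorem cycleGaps_cycleGaps_cycleGaps {m : ℕ} {q : ℕ × ℕ × ℕ × ℕ}
    (hq : q ∈ increasingQuadruples m) : cycleGaps (cycleGaps (cycleGaps q)) = q := by
  obtain ⟨i, j, k, l⟩ := q
  rw [mem_increasingQuadruples] at hq
  simp only [cycleGaps, Prod.mk.injEq, true_and, and_true]
  omega

theorem sum_comp_cycleGaps {M : Type*} [AddCommMonoid M] (m : ℕ) (f : ℕ × ℕ × ℕ × ℕ → M) :
    ∑ q ∈ increasingQuadruples m, f (cycleGaps q) = ∑ q ∈ increasingQuadruples m, f q :=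
  sum_nbij' cycleGaps (fun q => cycleGaps (cycleGaps q))
    (fun _ hq => cycleGaps_mem_increasingQuadruples hq)
    (fun _ hq => cycleGaps_mem_increasingQuadruples (cycleGaps_mem_increasingQuadruples hq))
    (fun _ hq => cycleGaps_cycleGaps_cycleGaps hq)
    (fun _ hq => cycleGaps_cycleGaps_cycleGaps hq)
    (fun _ _ => rfl)

theorem quadrupleArcsin_add_cycleGaps {m : ℕ} {q : ℕ × ℕ × ℕ × ℕ}
    (hq : q ∈ increasingQuadruples m) :
    quadrupleArcsin q + quadrupleArcsin (cycleGaps q) + quadrupleArcsin (cycleGaps (cycleGaps q))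
      = π / 2 := by
  obtain ⟨i, j, k, l⟩ := q
  rw [mem_increasingQuadruples] at hq
  obtain ⟨hij, hjk, hkl, -⟩ := hq
  have key := arcsin_add_arcsin_add_arcsin_cyclic (a := (j : ℝ) - i) (b := (k : ℝ) - j)
    (c := (l : ℝ) - k) (by simpa using hij) (by simpa using hjk) (by simpa using hkl)
  simp only [quadrupleArcsin, cycleGaps, Nat.cast_sub (by omega : j ≤ i + k),
    Nat.cast_sub (by omega : j ≤ i + l), Nat.cast_sub (by omega : i + k - j ≤ i + (i + l - j)),
    Nat.cast_sub (by omega : i + k - j ≤ i + l), Nat.cast_add]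
  convert key using 3 <;> ring_nf

theorem sum_quadrupleArcsin (m : ℕ) :
    ∑ q ∈ increasingQuadruples m, quadrupleArcsin q = #(increasingQuadruples m) * (π / 6) := by
  have h3 : 3 * ∑ q ∈ increasingQuadruples m, quadrupleArcsin q
      = ∑ q ∈ increasingQuadruples m, (quadrupleArcsin q + quadrupleArcsin (cycleGaps q)
          + quadrupleArcsin (cycleGaps (cycleGaps q))) := by
    rw [sum_add_distrib, sum_add_distrib,
      sum_comp_cycleGaps m fun q => quadrupleArcsin (cycleGaps q), sum_comp_cycleGaps]
    ring
  rw [sum_congr rfl fun _ hq => quadrupleArcsin_add_cycleGaps hq, sum_const, nsmul_eq_mul] at h3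
  linarith

theorem stmt_0 (n : ℕ) (hn : 3 ≤ n) :
    (1 / ((n + 1).choose 4 : ℝ)) *
      ∑ i ∈ Finset.range (n + 1), ∑ j ∈ Finset.range (n + 1),
        ∑ k ∈ Finset.range (n + 1), ∑ l ∈ Finset.range (n + 1),
          (if i < j ∧ j < k ∧ k < l then
            Real.arcsin (((k : ℝ) - j) / (Real.sqrt ((k : ℝ) - i) * Real.sqrt ((l : ℝ) - j)))
          else 0)
    = Real.pi / 6 := by
  have hpos : ((n + 1).choose 4 : ℝ) ≠ 0 := by
    exact_mod_cast (Nat.choose_pos (by omega)).ne'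
  calc _ = (1 / ((n + 1).choose 4 : ℝ)) *
          ∑ q ∈ increasingQuadruples (n + 1), quadrupleArcsin q := by
        rw [sum_increasingQuadruples]; rfl
    _ = π / 6 := by
        rw [sum_quadrupleArcsin, card_increasingQuadruples]
        field_simp
end

section
/- For all real numbers a, b, c with 0 ≤ a ≤ 1, 0 ≤ b ≤ 1 and 0 ≤ c ≤ 1: arcsin(a) + arcsin(b) + arcsin(c) = π/2 if and only if a² + b² + c² + 2abc = 1. -/
/-!
Write `α = arcsin a`, `β = arcsin b`. Since `arcsin c = π/2 - arccos c`, the identity says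
`arccos c = α + β`, and as `α + β ∈ [0, π]` this is equivalent to
`c = cos (α + β) = √(1 - a²) √(1 - b²) - a b`. Since `c + a b ≥ 0`, squaring
`c + a b = √((1 - a²)(1 - b²))` loses nothing, and the squared equation expands to
`a² + b² + c² + 2abc = 1`.
-/

open Real

namespace Real

theorem arccos_eq_iff_cos_eq {x θ : ℝ} (hx₁ : -1 ≤ x) (hx₂ : x ≤ 1) (hθ₀ : 0 ≤ θ) (hθ₁ : θ ≤ π) :
    arccos x = θ ↔ cos θ = x := by
  constructor
  · rintro rfl
    exact cos_arccos hx₁ hx₂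
  · rintro rfl
    exact arccos_cos hθ₀ hθ₁

theorem cos_arcsin_add_arcsin {a b : ℝ} (ha₁ : -1 ≤ a) (ha₂ : a ≤ 1) (hb₁ : -1 ≤ b)
    (hb₂ : b ≤ 1) : cos (arcsin a + arcsin b) = √(1 - a ^ 2) * √(1 - b ^ 2) - a * b := by
  rw [cos_add, cos_arcsin, cos_arcsin, sin_arcsin ha₁ ha₂, sin_arcsin hb₁ hb₂]

theorem arcsin_add_arcsin_add_arcsin_eq_pi_div_two_iff {a b c : ℝ} (ha₀ : 0 ≤ a) (ha₁ : a ≤ 1)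
    (hb₀ : 0 ≤ b) (hb₁ : b ≤ 1) (hc₁ : -1 ≤ c) (hc₂ : c ≤ 1) :
    arcsin a + arcsin b + arcsin c = π / 2 ↔ c = √(1 - a ^ 2) * √(1 - b ^ 2) - a * b := by
  have h_arccos : arcsin a + arcsin b + arcsin c = π / 2 ↔ arccos c = arcsin a + arcsin b := by
    rw [arccos_eq_pi_div_two_sub_arcsin]
    constructor <;> intro h <;> linarith
  have hα := arcsin_le_pi_div_two a
  have hβ := arcsin_le_pi_div_two b
  rw [h_arccos, arccos_eq_iff_cos_eq hc₁ hc₂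
      (add_nonneg (arcsin_nonneg.2 ha₀) (arcsin_nonneg.2 hb₀)) (by linarith),
    cos_arcsin_add_arcsin (by linarith) ha₁ (by linarith) hb₁, eq_comm]

end Real

theorem eq_sqrt_one_sub_sq_mul_sqrt_one_sub_sq_sub_mul_iff {a b c : ℝ} (ha : a ^ 2 ≤ 1)
    (hb : b ^ 2 ≤ 1) (hc : 0 ≤ c + a * b) :
    c = √(1 - a ^ 2) * √(1 - b ^ 2) - a * b ↔ a ^ 2 + b ^ 2 + c ^ 2 + 2 * a * b * c = 1 := by
  have ha' : 0 ≤ 1 - a ^ 2 := sub_nonneg.2 ha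
  rw [← sqrt_mul ha', eq_sub_iff_add_eq, eq_comm,
    sqrt_eq_iff_eq_sq (mul_nonneg ha' (sub_nonneg.2 hb)) hc]
  constructor <;> intro h <;> linear_combination -h

theorem stmt_2 (a b c : ℝ) (ha0 : 0 ≤ a) (ha1 : a ≤ 1) (hb0 : 0 ≤ b) (hb1 : b ≤ 1)
    (hc0 : 0 ≤ c) (hc1 : c ≤ 1) :
    Real.arcsin a + Real.arcsin b + Real.arcsin c = Real.pi / 2 ↔
      a ^ 2 + b ^ 2 + c ^ 2 + 2 * a * b * c = 1 := by
  rw [Real.arcsin_add_arcsin_add_arcsin_eq_pi_div_two_iff ha0 ha1 hb0 hb1 (by linarith) hc1]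
  exact eq_sqrt_one_sub_sq_mul_sqrt_one_sub_sq_sub_mul_iff (pow_le_one₀ ha0 ha1)
    (pow_le_one₀ hb0 hb1) (add_nonneg hc0 (mul_nonneg ha0 hb0))
end

section
/- Let x, y, ρ be real numbers with 0 ≤ x ≤ y ≤ 1 and 0 < ρ < 1. Then √(1 − ρ^{1−y+x}) · (ρ^{1−y} − ρ − ρ^{y−x} + ρ^{x}) + √(1 − ρ^{y}) · (−ρ^{1−y} − ρ + ρ^{y−x} + ρ^{x}) ≥ 0. -/
/-! With `v = ρ^x`, `b = ρ^(y-x)`, `w = ρ^(1-y)` in `(0, 1]`, put `A = √(1 - w v)` and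
`B = √(1 - b v)`; the expression is `(A + B) v (1 - b w) + (A - B)(w - b)`. Since
`A² - B² = -v (w - b)`, multiplying by `A + B` gives `v ((A + B)² (1 - b w) - (w - b)²)`,
and `(A + B)² ≥ A² + B² = 2 - w v - b v` reduces everything to a polynomial inequality
on the unit cube. -/

open Real

lemma sq_sub_le_two_sub_mul_one_sub_mul {b v w : ℝ} (hb0 : 0 ≤ b) (hb1 : b ≤ 1)
    (hv1 : v ≤ 1) (hw0 : 0 ≤ w) (hw1 : w ≤ 1) :
    (w - b) ^ 2 ≤ (2 - w * v - b * v) * (1 - b * w) := by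
  have hbw : 0 ≤ 1 - b * w := sub_nonneg.2 (mul_le_one₀ hb1 hw0 hw1)
  have hw2 : 0 ≤ 1 - w ^ 2 := sub_nonneg.2 (pow_le_one₀ hw0 hw1)
  have hb2 : 0 ≤ 1 - b ^ 2 := sub_nonneg.2 (pow_le_one₀ hb0 hb1)
  calc (w - b) ^ 2
      = (2 - w - b) * (1 - b * w) - ((1 - w ^ 2) * (1 - b) + (1 - b ^ 2) * (1 - w)) := by ring
    _ ≤ (2 - w - b) * (1 - b * w) :=
        sub_le_self _ (add_nonneg (mul_nonneg hw2 (sub_nonneg.2 hb1))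
          (mul_nonneg hb2 (sub_nonneg.2 hw1)))
    _ ≤ (2 - w * v - b * v) * (1 - b * w) := by
        gcongr
        · exact mul_le_of_le_one_right hw0 hv1
        · exact mul_le_of_le_one_right hb0 hv1

lemma sqrt_mul_add_sqrt_mul_nonneg {b v w : ℝ} (hb0 : 0 ≤ b) (hb1 : b ≤ 1)
    (hv0 : 0 ≤ v) (hv1 : v ≤ 1) (hw0 : 0 ≤ w) (hw1 : w ≤ 1) :
    0 ≤ √(1 - w * v) * (w - b * v * w - b + v) + √(1 - b * v) * (-w - b * v * w + b + v) := by
  set A := √(1 - w * v)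
  set B := √(1 - b * v)
  have hA0 : 0 ≤ A := sqrt_nonneg _
  have hB0 : 0 ≤ B := sqrt_nonneg _
  have hA2 : A ^ 2 = 1 - w * v := sq_sqrt (sub_nonneg.2 (mul_le_one₀ hw1 hv0 hv1))
  have hB2 : B ^ 2 = 1 - b * v := sq_sqrt (sub_nonneg.2 (mul_le_one₀ hb1 hv0 hv1))
  rcases (add_nonneg hA0 hB0).eq_or_lt with hAB | hAB
  · rw [show A = 0 by linarith, show B = 0 by linarith]
    simp
  refine nonneg_of_mul_nonneg_right (a := A + B) ?_ hAB
  have hbw : 0 ≤ 1 - b * w := sub_nonneg.2 (mul_le_one₀ hb1 hw0 hw1)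
  have hsq : (w - b) ^ 2 ≤ (A + B) ^ 2 * (1 - b * w) := by
    calc (w - b) ^ 2 ≤ (2 - w * v - b * v) * (1 - b * w) :=
          sq_sub_le_two_sub_mul_one_sub_mul hb0 hb1 hv1 hw0 hw1
      _ ≤ (A + B) ^ 2 * (1 - b * w) := by
          gcongr
          nlinarith [mul_nonneg hA0 hB0]
  calc (0 : ℝ) ≤ v * ((A + B) ^ 2 * (1 - b * w) - (w - b) ^ 2) :=
        mul_nonneg hv0 (sub_nonneg.2 hsq)
    _ = _ := by linear_combination (b - w) * (hA2 - hB2)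

theorem stmt_3 (x y ρ : ℝ) (hx : 0 ≤ x) (hxy : x ≤ y) (hy : y ≤ 1)
    (hρ0 : 0 < ρ) (hρ1 : ρ < 1) :
    0 ≤ Real.sqrt (1 - ρ ^ (1 - y + x)) * (ρ ^ (1 - y) - ρ - ρ ^ (y - x) + ρ ^ x)
      + Real.sqrt (1 - ρ ^ y) * (-ρ ^ (1 - y) - ρ + ρ ^ (y - x) + ρ ^ x) := by
  have hpow_le_one {t : ℝ} (ht : 0 ≤ t) : ρ ^ t ≤ 1 := rpow_le_one hρ0.le hρ1.le ht
  have hpow_nonneg (t : ℝ) : 0 ≤ ρ ^ t := rpow_nonneg hρ0.le t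
  have hw : ρ ^ (1 - y + x) = ρ ^ (1 - y) * ρ ^ x := rpow_add hρ0 _ _
  have hb : ρ ^ y = ρ ^ (y - x) * ρ ^ x := by rw [← rpow_add hρ0, sub_add_cancel]
  have hρ : ρ = ρ ^ (y - x) * ρ ^ x * ρ ^ (1 - y) := by
    rw [← rpow_add hρ0, ← rpow_add hρ0, show y - x + x + (1 - y) = 1 by ring, rpow_one]
  have key := sqrt_mul_add_sqrt_mul_nonneg (hpow_nonneg (y - x)) (hpow_le_one (sub_nonneg.2 hxy))
    (hpow_nonneg x) (hpow_le_one hx) (hpow_nonneg (1 - y)) (hpow_le_one (sub_nonneg.2 hy))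
  rwa [← hρ, ← hw, ← hb] at key
end

section
/- Let k be a real number with k ≠ 1 and let q ≥ 1 and d be integers with 0 ≤ d < q. Then Σ_{i=1}^{q} Σ_{j=d+1}^{d+q} k^{|j−i|} = ( (q − d)(1 − k²) + k(k^{q+d} + k^{q−d} − 2k^{d}) ) / (1 − k)². -/
/-!
Shifting to 0-based indices, the sum is `∑ i < n, ∑ j < n, k ^ |d + j - i|` with `n = q`.
Going from `n` to `n + 1` adds a column, which is `k ^ (d + 1)` times a geometric sum, and a
row, which splits at its diagonal entry into two geometric sums. Clearing the denominator
`(1 - k) ^ 2` with `(1 - k) * ∑ m < n, k ^ m = 1 - k ^ n`, the identity follows by induction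
on `n ≥ d + 1`, the base case `n = d + 1` being the square of a geometric sum.
-/

open Finset

section Semiring

variable {R : Type*} [Semiring R] (k : R)

theorem sum_range_pow_natAbs_sub (c e : ℕ) :
    ∑ j ∈ range (c + 1 + e), k ^ ((j : ℤ) - c).natAbs
      = ∑ m ∈ range (c + 1), k ^ m + k * ∑ m ∈ range e, k ^ m := by
  rw [sum_range_add, ← sum_range_reflect, mul_sum]
  congr 1 <;> refine sum_congr rfl fun j hj => ?_
  · rw [mem_range] at hj
    congr 1
    omega
  · rw [← pow_succ']
    congr 1
    omega

theorem sum_range_pow_natAbs_add_sub (c n : ℕ) :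
    ∑ i ∈ range n, k ^ ((c : ℤ) + n - i).natAbs = k ^ (c + 1) * ∑ m ∈ range n, k ^ m := by
  rw [← sum_range_reflect, mul_sum]
  refine sum_congr rfl fun i hi => ?_
  rw [mem_range] at hi
  rw [← pow_add]
  congr 1
  omega

theorem sum_range_sum_range_pow_natAbs_self (d : ℕ) :
    ∑ i ∈ range (d + 1), ∑ j ∈ range (d + 1), k ^ ((d : ℤ) + j - i).natAbs
      = (∑ m ∈ range (d + 1), k ^ m) * ∑ m ∈ range (d + 1), k ^ m := by
  rw [sum_mul_sum, ← sum_range_reflect]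
  refine sum_congr rfl fun i hi => sum_congr rfl fun j _ => ?_
  rw [mem_range] at hi
  rw [← pow_add]
  congr 1
  omega

theorem sum_range_succ_sum_range_succ_pow_natAbs (d n : ℕ) :
    ∑ i ∈ range (d + 1 + n + 1), ∑ j ∈ range (d + 1 + n + 1), k ^ ((d : ℤ) + j - i).natAbs
      = ∑ i ∈ range (d + 1 + n), ∑ j ∈ range (d + 1 + n), k ^ ((d : ℤ) + j - i).natAbs
        + k ^ (d + 1) * ∑ m ∈ range (d + 1 + n), k ^ m
        + (∑ m ∈ range (n + 2), k ^ m + k * ∑ m ∈ range d, k ^ m) := by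
  have row : ∑ j ∈ range (d + 1 + n + 1), k ^ ((d : ℤ) + j - (d + 1 + n : ℕ)).natAbs
      = ∑ j ∈ range (n + 1 + 1 + d), k ^ ((j : ℤ) - (n + 1 : ℕ)).natAbs := by
    rw [show n + 1 + 1 + d = d + 1 + n + 1 by omega]
    refine sum_congr rfl fun j _ => ?_
    congr 1
    omega
  rw [sum_range_succ, row, sum_range_pow_natAbs_sub]
  simp only [sum_range_succ (n := d + 1 + n), sum_add_distrib]
  rw [← sum_range_pow_natAbs_add_sub]

end Semiring

theorem one_sub_sq_mul_sum_range_sum_range_pow_natAbs {R : Type*} [CommRing R] (k : R) (d m : ℕ) :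
    (1 - k) ^ 2 * ∑ i ∈ range (d + 1 + m), ∑ j ∈ range (d + 1 + m), k ^ ((d : ℤ) + j - i).natAbs
      = ((m : R) + 1) * (1 - k ^ 2) + k * (k ^ (2 * d + 1 + m) + k ^ (m + 1) - 2 * k ^ d) := by
  induction m with
  | zero =>
    rw [add_zero, sum_range_sum_range_pow_natAbs_self]
    linear_combination (1 - k ^ (d + 1) + (1 - k) * ∑ m ∈ range (d + 1), k ^ m) *
      mul_neg_geom_sum k (d + 1)
  | succ n ih =>
    rw [← add_assoc, sum_range_succ_sum_range_succ_pow_natAbs]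
    push_cast
    linear_combination ih + (1 - k) * k ^ (d + 1) * mul_neg_geom_sum k (d + 1 + n)
      + (1 - k) * mul_neg_geom_sum k (n + 2) + (1 - k) * k * mul_neg_geom_sum k d

theorem stmt_7_general (k : ℝ) (hk : k ≠ 1) (q d : ℕ) (hd : d < q) :
    ∑ i ∈ Finset.Icc 1 q, ∑ j ∈ Finset.Icc (d + 1) (d + q), k ^ ((j : ℤ) - i).natAbs
    = (((q : ℝ) - d) * (1 - k ^ 2) + k * (k ^ (q + d) + k ^ (q - d) - 2 * k ^ d)) /
        (1 - k) ^ 2 := by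
  obtain ⟨m, rfl⟩ : ∃ m, q = d + 1 + m := ⟨q - (d + 1), by omega⟩
  have reindex : ∑ i ∈ Icc 1 (d + 1 + m), ∑ j ∈ Icc (d + 1) (d + (d + 1 + m)),
        k ^ ((j : ℤ) - i).natAbs
      = ∑ i ∈ range (d + 1 + m), ∑ j ∈ range (d + 1 + m), k ^ ((d : ℤ) + j - i).natAbs := by
    simp only [← Ico_add_one_right_eq_Icc, sum_Ico_eq_sum_range,
      show d + 1 + m + 1 - 1 = d + 1 + m by omega,
      show d + (d + 1 + m) + 1 - (d + 1) = d + 1 + m by omega]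
    refine sum_congr rfl fun i _ => sum_congr rfl fun j _ => ?_
    congr 1
    omega
  have hk' : (1 - k) ^ 2 ≠ 0 := pow_ne_zero 2 (sub_ne_zero.mpr hk.symm)
  rw [reindex, eq_div_iff hk', mul_comm, one_sub_sq_mul_sum_range_sum_range_pow_natAbs,
    show d + 1 + m + d = 2 * d + 1 + m by omega, show d + 1 + m - d = m + 1 by omega]
  push_cast
  ring

theorem stmt_7 (k : ℝ) (hk : k ≠ 1) (q d : ℕ) (hq : 1 ≤ q) (hd : d < q) :
    ∑ i ∈ Finset.Icc 1 q, ∑ j ∈ Finset.Icc (d + 1) (d + q), k ^ ((j : ℤ) - i).natAbs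
    = (((q : ℝ) - d) * (1 - k ^ 2) + k * (k ^ (q + d) + k ^ (q - d) - 2 * k ^ d)) /
        (1 - k) ^ 2 :=
  stmt_7_general k hk q d hd
end

section
/- Let 0 < k_tot < 1, a > 0 and x be a real number with 0 ≤ x < a and x ≤ 1. Let (kₙ) be a sequence of reals in (0,1) with kₙ^{n−1} → k_tot, and let (qₙ), (dₙ) be sequences of natural numbers with qₙ/n → a, dₙ/n → x and dₙ < qₙ for all n. Then ( (qₙ − dₙ)(1 − kₙ²) + kₙ(kₙ^{qₙ+dₙ} + kₙ^{qₙ−dₙ} − 2kₙ^{dₙ}) ) / ( qₙ(1 − kₙ²) − 2kₙ(1 − kₙ^{qₙ}) ) converges, as n → ∞, to ( (a − x)·log(k_tot) + (k_tot^{x} − k_tot^{a+x}/2 − k_tot^{a−x}/2) ) / ( a·log(k_tot) + (1 − k_tot^{a}) ). -/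
/-!
Put `L = log K`. From `kₙ ^ (n - 1) → K` one gets `n log kₙ → L`, hence `kₙ → 1`,
`kₙ ^ cₙ = exp ((cₙ / n) · n log kₙ) → K ^ γ` whenever `cₙ / n → γ`, and, squeezing
`1 - k` between `-log k` and `-k log k`, `n (1 - kₙ) → -L ≠ 0`. After dividing by `n (1 - kₙ)`,
the numerator and the denominator (the numerator at lag `0`) converge, and the limit of the
denominator is nonzero because `a L + 1 - K ^ a < 0` by `log y < y - 1` at `y = K ^ a`.
-/

open Filter Real Topology

/-- `armaCov k q d / armaCov k q 0` is the lag-`d` correlation of Lemma 2. -/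
noncomputable def armaCov (k : ℝ) (q d : ℕ) : ℝ :=
  ((q : ℝ) - d) * (1 - k ^ 2) + k * (k ^ (q + d) + k ^ (q - d) - 2 * k ^ d)

lemma armaCov_zero (k : ℝ) (q : ℕ) : armaCov k q 0 = q * (1 - k ^ 2) - 2 * k * (1 - k ^ q) := by
  simp only [armaCov, Nat.cast_zero, sub_zero, Nat.sub_zero, add_zero, pow_zero]
  ring

lemma tendsto_zero_of_tendsto_mul_of_tendsto_atTop {α : Type*} {l : Filter α} {u v : α → ℝ}
    {L : ℝ} (h : Tendsto (fun n => v n * u n) l (𝓝 L)) (hv : Tendsto v l atTop) :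
    Tendsto u l (𝓝 0) := by
  refine (h.div_atTop hv).congr' ?_
  filter_upwards [hv.eventually_ne_atTop 0] with n hn
  rw [mul_div_cancel_left₀ _ hn]

lemma tendsto_div_of_tendsto_div_of_tendsto_div {α : Type*} {l : Filter α} {f g w : α → ℝ}
    {A B : ℝ} (hf : Tendsto (fun n => f n / w n) l (𝓝 A))
    (hg : Tendsto (fun n => g n / w n) l (𝓝 B)) (hB : B ≠ 0) (hw : ∀ᶠ n in l, w n ≠ 0) :
    Tendsto (fun n => f n / g n) l (𝓝 (A / B)) := by
  refine (hf.div hg hB).congr' ?_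
  filter_upwards [hw] with n hn
  exact div_div_div_cancel_right₀ hn _ _

lemma mul_log_add_one_sub_rpow_neg {K a : ℝ} (hK : 0 < K) (hK1 : K ≠ 1) (ha : a ≠ 0) :
    a * log K + (1 - K ^ a) < 0 := by
  have hKa : K ^ a ≠ 1 := fun h => by
    have := congrArg log h
    rw [log_rpow hK, log_one] at this
    exact mul_ne_zero ha (log_ne_zero_of_pos_of_ne_one hK hK1) this
  have := log_lt_sub_one_of_pos (rpow_pos_of_pos hK a) hKa
  rw [log_rpow hK] at this
  linarith

section NatMulLog

variable {k : ℕ → ℝ} {K L : ℝ}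

lemma tendsto_natCast_mul_log_of_tendsto_pow_pred (hK : 0 < K)
    (h : Tendsto (fun n => k n ^ (n - 1)) atTop (𝓝 K)) :
    Tendsto (fun n : ℕ => (n : ℝ) * log (k n)) atTop (𝓝 (log K)) := by
  have hpred : Tendsto (fun n : ℕ => ((n - 1 : ℕ) : ℝ) * log (k n)) atTop (𝓝 (log K)) :=
    (h.log hK.ne').congr fun n => log_pow _ _
  have hlog : Tendsto (fun n => log (k n)) atTop (𝓝 0) :=
    tendsto_zero_of_tendsto_mul_of_tendsto_atTop hpred
      (tendsto_natCast_atTop_atTop.comp (tendsto_sub_atTop_nat 1))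
  refine (add_zero (log K) ▸ hpred.add hlog).congr' ?_
  filter_upwards [eventually_ge_atTop 1] with n hn
  rw [Nat.cast_sub hn, Nat.cast_one]
  ring

lemma tendsto_one_of_tendsto_natCast_mul_log (hk0 : ∀ n, 0 < k n)
    (hlog : Tendsto (fun n : ℕ => (n : ℝ) * log (k n)) atTop (𝓝 L)) :
    Tendsto k atTop (𝓝 1) := by
  have h := (tendsto_zero_of_tendsto_mul_of_tendsto_atTop hlog tendsto_natCast_atTop_atTop).rexp
  rw [exp_zero] at h
  exact h.congr fun n => exp_log (hk0 n)

lemma tendsto_natCast_mul_one_sub_of_tendsto_natCast_mul_log (hk0 : ∀ n, 0 < k n)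
    (hlog : Tendsto (fun n : ℕ => (n : ℝ) * log (k n)) atTop (𝓝 L)) :
    Tendsto (fun n : ℕ => (n : ℝ) * (1 - k n)) atTop (𝓝 (-L)) := by
  have hk := tendsto_one_of_tendsto_natCast_mul_log hk0 hlog
  have hlower : Tendsto (fun n => -(k n * ((n : ℝ) * log (k n)))) atTop (𝓝 (-L)) := by
    simpa using (hk.mul hlog).neg
  refine tendsto_of_tendsto_of_tendsto_of_le_of_le hlower hlog.neg (fun n => ?_) (fun n => ?_)
  · have hkl : k n - 1 ≤ k n * log (k n) := by
      have := mul_le_mul_of_nonneg_left (one_sub_inv_le_log_of_pos (hk0 n)) (hk0 n).le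
      rwa [mul_sub, mul_one, mul_inv_cancel₀ (hk0 n).ne'] at this
    nlinarith [(Nat.cast_nonneg n : (0 : ℝ) ≤ n)]
  · nlinarith [log_le_sub_one_of_pos (hk0 n), (Nat.cast_nonneg n : (0 : ℝ) ≤ n)]

lemma tendsto_pow_of_tendsto_natCast_mul_log {c : ℕ → ℕ} {γ : ℝ} (hk0 : ∀ n, 0 < k n)
    (hK : 0 < K) (hlog : Tendsto (fun n : ℕ => (n : ℝ) * log (k n)) atTop (𝓝 (log K)))
    (hc : Tendsto (fun n => (c n : ℝ) / n) atTop (𝓝 γ)) :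
    Tendsto (fun n => k n ^ c n) atTop (𝓝 (K ^ γ)) := by
  rw [rpow_def_of_pos hK, mul_comm]
  refine (hc.mul hlog).rexp.congr' ?_
  filter_upwards [eventually_ne_atTop 0] with n hn
  have hn' : (n : ℝ) ≠ 0 := Nat.cast_ne_zero.2 hn
  rw [show (c n : ℝ) / n * (n * log (k n)) = c n * log (k n) by field_simp, exp_nat_mul,
    exp_log (hk0 n)]

end NatMulLog

lemma tendsto_armaCov_div {k : ℕ → ℝ} {K a x : ℝ} {q d : ℕ → ℕ} (hk0 : ∀ n, 0 < k n)
    (hK : 0 < K) (hK1 : K ≠ 1)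
    (hlog : Tendsto (fun n : ℕ => (n : ℝ) * log (k n)) atTop (𝓝 (log K)))
    (hq : Tendsto (fun n => (q n : ℝ) / n) atTop (𝓝 a))
    (hd : Tendsto (fun n => (d n : ℝ) / n) atTop (𝓝 x)) (hdq : ∀ n, d n ≤ q n) :
    Tendsto (fun n => armaCov (k n) (q n) (d n) / (n * (1 - k n))) atTop
      (𝓝 (2 * (a - x) - (K ^ (a + x) + K ^ (a - x) - 2 * K ^ x) / log K)) := by
  have hL : -log K ≠ 0 := neg_ne_zero.2 (log_ne_zero_of_pos_of_ne_one hK hK1)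
  have hk := tendsto_one_of_tendsto_natCast_mul_log hk0 hlog
  have hw := tendsto_natCast_mul_one_sub_of_tendsto_natCast_mul_log hk0 hlog
  have hpow {c : ℕ → ℕ} {γ : ℝ} :=
    tendsto_pow_of_tendsto_natCast_mul_log (c := c) (γ := γ) hk0 hK hlog
  have hsub : Tendsto (fun n => ((q n - d n : ℕ) : ℝ) / n) atTop (𝓝 (a - x)) :=
    (hq.sub hd).congr fun n => by rw [Nat.cast_sub (hdq n), sub_div]
  have hadd : Tendsto (fun n => ((q n + d n : ℕ) : ℝ) / n) atTop (𝓝 (a + x)) :=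
    (hq.add hd).congr fun n => by rw [Nat.cast_add, add_div]
  have hlim := ((hq.sub hd).mul (tendsto_const_nhds (x := (1 : ℝ)).add hk)).add
    ((hk.mul (((hpow hadd).add (hpow hsub)).sub ((hpow hd).const_mul 2))).div hw hL)
  convert hlim.congr' ?_ using 2
  · ring
  filter_upwards [hw.eventually_ne hL, eventually_ne_atTop 0] with n hnk hn
  have hn' : (n : ℝ) ≠ 0 := Nat.cast_ne_zero.2 hn
  have hk' : 1 - k n ≠ 0 := right_ne_zero_of_mul hnk
  simp only [armaCov, Pi.div_apply]
  field_simp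
  ring

theorem stmt_8_general (ktot a x : ℝ) (hktot0 : 0 < ktot) (hktot1 : ktot < 1)
    (ha : 0 < a)
    (kseq : ℕ → ℝ) (hk0 : ∀ n, 0 < kseq n)
    (hklim : Filter.Tendsto (fun n => kseq n ^ (n - 1)) Filter.atTop (nhds ktot))
    (qseq dseq : ℕ → ℕ)
    (hq : Filter.Tendsto (fun n => (qseq n : ℝ) / n) Filter.atTop (nhds a))
    (hd : Filter.Tendsto (fun n => (dseq n : ℝ) / n) Filter.atTop (nhds x))
    (hdq : ∀ n, dseq n < qseq n) :
    Filter.Tendsto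
      (fun n =>
        (((qseq n : ℝ) - dseq n) * (1 - kseq n ^ 2)
            + kseq n * (kseq n ^ (qseq n + dseq n) + kseq n ^ (qseq n - dseq n)
                - 2 * kseq n ^ dseq n))
          / ((qseq n : ℝ) * (1 - kseq n ^ 2) - 2 * kseq n * (1 - kseq n ^ qseq n)))
      Filter.atTop
      (nhds (((a - x) * Real.log ktot
          + (ktot ^ x - ktot ^ (a + x) / 2 - ktot ^ (a - x) / 2))
        / (a * Real.log ktot + (1 - ktot ^ a)))) := by
  have hL : log ktot ≠ 0 := (log_neg hktot0 hktot1).ne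
  have hK1 : ktot ≠ 1 := hktot1.ne
  have hlog := tendsto_natCast_mul_log_of_tendsto_pow_pred hktot0 hklim
  have hlag := tendsto_armaCov_div hk0 hktot0 hK1 hlog hq hd fun n => (hdq n).le
  have hlag0 := tendsto_armaCov_div (d := 0) (x := 0) hk0 hktot0 hK1 hlog hq
    (by simp) fun n => Nat.zero_le _
  have hD := mul_log_add_one_sub_rpow_neg hktot0 hK1 ha.ne'
  have hw := (tendsto_natCast_mul_one_sub_of_tendsto_natCast_mul_log hk0 hlog).eventually_ne
    (neg_ne_zero.2 hL)
  have hB : 2 * a - (ktot ^ a + ktot ^ a - 2) / log ktot ≠ 0 := by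
    rw [show 2 * a - (ktot ^ a + ktot ^ a - 2) / log ktot
      = 2 * (a * log ktot + (1 - ktot ^ a)) / log ktot by field_simp; ring]
    exact div_ne_zero (mul_ne_zero two_ne_zero hD.ne) hL
  simp only [sub_zero, add_zero, rpow_zero, mul_one] at hlag0
  convert tendsto_div_of_tendsto_div_of_tendsto_div hlag hlag0 hB hw using 2 with n
  · rw [Pi.zero_apply, armaCov_zero]
    rfl
  · rw [div_eq_div_iff hD.ne hB]
    field_simp
    ring

theorem stmt_8 (ktot a x : ℝ) (hktot0 : 0 < ktot) (hktot1 : ktot < 1)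
    (ha : 0 < a) (hx0 : 0 ≤ x) (hxa : x < a) (hx1 : x ≤ 1)
    (kseq : ℕ → ℝ) (hk0 : ∀ n, 0 < kseq n) (hk1 : ∀ n, kseq n < 1)
    (hklim : Filter.Tendsto (fun n => kseq n ^ (n - 1)) Filter.atTop (nhds ktot))
    (qseq dseq : ℕ → ℕ)
    (hq : Filter.Tendsto (fun n => (qseq n : ℝ) / n) Filter.atTop (nhds a))
    (hd : Filter.Tendsto (fun n => (dseq n : ℝ) / n) Filter.atTop (nhds x))
    (hdq : ∀ n, dseq n < qseq n) :
    Filter.Tendsto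
      (fun n =>
        (((qseq n : ℝ) - dseq n) * (1 - kseq n ^ 2)
            + kseq n * (kseq n ^ (qseq n + dseq n) + kseq n ^ (qseq n - dseq n)
                - 2 * kseq n ^ dseq n))
          / ((qseq n : ℝ) * (1 - kseq n ^ 2) - 2 * kseq n * (1 - kseq n ^ qseq n)))
      Filter.atTop
      (nhds (((a - x) * Real.log ktot
          + (ktot ^ x - ktot ^ (a + x) / 2 - ktot ^ (a - x) / 2))
        / (a * Real.log ktot + (1 - ktot ^ a)))) :=
  stmt_8_general ktot a x hktot0 hktot1 ha kseq hk0 hklim qseq dseq hq hd hdq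
end

section
/- For every real k with 0 < k < 1: ∫₀¹ (1 − z) ∫₀^z ∫₀^y arcsin( √(1 − k^{y−x}) · ( k^{z−y}·(1 − √(1 − k^{x})·√(1 − k^{z})) + k^{x} ) / (4·√(1 − k^{z})) ) dx dy dz > 0. -/
/-!
For `0 < x < y < z` the argument of `arcsin` is positive: `√(1 - k ^ (y - x)) > 0`, the term
`k ^ x` is positive and `k ^ (z - y) * (1 - √(1 - k ^ x) * √(1 - k ^ z))` is nonnegative. So the
integrand is positive and it remains to see that the outer integrand is integrable: it is
continuous for `z > 0` (the only singularity, `√(1 - k ^ z) = 0`, is at `z = 0`) and bounded,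
since `|arcsin| ≤ π / 2`.
-/

open Real MeasureTheory Set intervalIntegral

section IteratedIntegral

variable {f : ℝ → ℝ → ℝ → ℝ}

theorem continuous_iteratedIntegral
    (hf : Continuous fun p : ℝ × ℝ × ℝ => f p.1 p.2.1 p.2.2) :
    Continuous fun z => ∫ y in (0 : ℝ)..z, ∫ x in (0 : ℝ)..y, f z y x := by
  have hinner : Continuous fun q : ℝ × ℝ => ∫ x in (0 : ℝ)..q.2, f q.1 q.2 x :=
    continuous_parametric_intervalIntegral_of_continuous
      (f := fun q x => f q.1 q.2 x) (by fun_prop) continuous_snd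
  exact continuous_parametric_intervalIntegral_of_continuous
    (f := fun z y => ∫ x in (0 : ℝ)..y, f z y x) hinner continuous_id

/-- Near `z₀ > 0` the integral agrees with that of the globally continuous
`(z, y, x) ↦ f (max z (z₀ / 2)) y x`. -/
theorem continuousOn_iteratedIntegral
    (hf : ∀ p : ℝ × ℝ × ℝ, 0 < p.1 → ContinuousAt (fun p => f p.1 p.2.1 p.2.2) p) :
    ContinuousOn (fun z => ∫ y in (0 : ℝ)..z, ∫ x in (0 : ℝ)..y, f z y x) (Ioi 0) := by
  intro z₀ (hz₀ : 0 < z₀)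
  have hc : 0 < z₀ / 2 := half_pos hz₀
  have hmax : Continuous fun p : ℝ × ℝ × ℝ => f (max p.1 (z₀ / 2)) p.2.1 p.2.2 :=
    continuous_iff_continuousAt.2 fun p =>
      (hf _ (hc.trans_le (le_max_right _ _))).comp
        (f := fun p : ℝ × ℝ × ℝ => (max p.1 (z₀ / 2), p.2)) (by fun_prop)
  refine ((continuous_iteratedIntegral (f := fun z => f (max z (z₀ / 2))) hmax).continuousAt.congr
    ?_).continuousWithinAt
  filter_upwards [Ioi_mem_nhds (half_lt_self hz₀)] with z (hz : z₀ / 2 < z)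
  rw [max_eq_left hz.le]

theorem norm_iteratedIntegral_le {C z : ℝ} (hz : 0 ≤ z) (hf : ∀ z y x, ‖f z y x‖ ≤ C) :
    ‖∫ y in (0 : ℝ)..z, ∫ x in (0 : ℝ)..y, f z y x‖ ≤ C * z * z := by
  have hC : 0 ≤ C := (norm_nonneg _).trans (hf 0 0 0)
  refine (intervalIntegral.norm_integral_le_of_norm_le_const fun y hy => ?_).trans_eq
    (by rw [sub_zero, abs_of_nonneg hz])
  rw [uIoc_of_le hz] at hy
  calc ‖∫ x in (0 : ℝ)..y, f z y x‖ ≤ C * |y - 0| :=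
        intervalIntegral.norm_integral_le_of_norm_le_const fun x _ => hf z y x
    _ ≤ C * z := by
        rw [sub_zero, abs_of_pos hy.1]
        exact mul_le_mul_of_nonneg_left hy.2 hC

theorem iteratedIntegral_pos {g : ℝ → ℝ → ℝ} {z : ℝ} (hz : 0 < z)
    (hg : Continuous fun q : ℝ × ℝ => g q.1 q.2)
    (hpos : ∀ y x, 0 < x → x < y → y < z → 0 < g y x) :
    0 < ∫ y in (0 : ℝ)..z, ∫ x in (0 : ℝ)..y, g y x := by
  have hinner : Continuous fun y => ∫ x in (0 : ℝ)..y, g y x :=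
    continuous_parametric_intervalIntegral_of_continuous hg continuous_id
  refine intervalIntegral_pos_of_pos_on (hinner.intervalIntegrable _ _) (fun y hy => ?_) hz
  refine intervalIntegral_pos_of_pos_on
    ((hg.comp (f := fun x => (y, x)) (by fun_prop)).intervalIntegrable _ _)
    (fun x hx => hpos y x hx.1 hx.2 hy.2) hy.1

end IteratedIntegral

theorem IntervalIntegrable.of_continuousOn_Ioo_of_norm_le {f : ℝ → ℝ} {a b C : ℝ}
    (hab : a ≤ b) (hf : ContinuousOn f (Ioo a b)) (hC : ∀ x ∈ Ioo a b, ‖f x‖ ≤ C) :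
    IntervalIntegrable f volume a b := by
  rw [intervalIntegrable_iff_integrableOn_Ioo_of_le hab]
  exact IntegrableOn.of_bound measure_Ioo_lt_top (hf.aestronglyMeasurable measurableSet_Ioo) C
    ((ae_restrict_iff' measurableSet_Ioo).2 (Filter.Eventually.of_forall hC))

noncomputable def ar1Integrand (k z y x : ℝ) : ℝ :=
  arcsin (√(1 - k ^ (y - x)) * (k ^ (z - y) * (1 - √(1 - k ^ x) * √(1 - k ^ z)) + k ^ x) /
    (4 * √(1 - k ^ z)))

section Ar1Integrand

variable {k : ℝ}

theorem norm_ar1Integrand_le (k z y x : ℝ) : ‖ar1Integrand k z y x‖ ≤ π / 2 :=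
  abs_le.2 ⟨neg_pi_div_two_le_arcsin _, arcsin_le_pi_div_two _⟩

theorem continuousAt_ar1Integrand (hk0 : 0 < k) (hk1 : k < 1) (p : ℝ × ℝ × ℝ)
    (hp : 0 < p.1) :
    ContinuousAt (fun p : ℝ × ℝ × ℝ => ar1Integrand k p.1 p.2.1 p.2.2) p := by
  have hk : k ≠ 0 := hk0.ne'
  have hden : 4 * √(1 - k ^ p.1) ≠ 0 := by
    have := rpow_lt_one hk0.le hk1 hp
    positivity
  unfold ar1Integrand
  fun_prop (disch := assumption)

theorem ar1Integrand_pos (hk0 : 0 < k) (hk1 : k < 1) {z y x : ℝ} (hz : 0 < z) (hxy : x < y) :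
    0 < ar1Integrand k z y x := by
  have hkx := rpow_pos_of_pos hk0 x
  have hkz := rpow_pos_of_pos hk0 z
  have hkz1 := rpow_lt_one hk0.le hk1 hz
  have hprod : √(1 - k ^ x) * √(1 - k ^ z) ≤ 1 :=
    mul_le_one₀ (sqrt_le_one.2 (by linarith)) (sqrt_nonneg _) (sqrt_le_one.2 (by linarith))
  have hcross : 0 ≤ k ^ (z - y) * (1 - √(1 - k ^ x) * √(1 - k ^ z)) :=
    mul_nonneg (rpow_pos_of_pos hk0 _).le (sub_nonneg.2 hprod)
  have hyx : 0 < 1 - k ^ (y - x) := sub_pos.2 (rpow_lt_one hk0.le hk1 (sub_pos.2 hxy))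
  have hz1 : 0 < 1 - k ^ z := sub_pos.2 hkz1
  rw [ar1Integrand, arcsin_pos]
  positivity

end Ar1Integrand

theorem stmt_12 (k : ℝ) (hk0 : 0 < k) (hk1 : k < 1) :
    0 < ∫ z in (0 : ℝ)..1, (1 - z) * ∫ y in (0 : ℝ)..z, ∫ x in (0 : ℝ)..y,
      Real.arcsin (Real.sqrt (1 - k ^ (y - x)) *
          (k ^ (z - y) * (1 - Real.sqrt (1 - k ^ x) * Real.sqrt (1 - k ^ z)) + k ^ x) /
        (4 * Real.sqrt (1 - k ^ z))) := by
  have hG := continuousOn_iteratedIntegral (continuousAt_ar1Integrand hk0 hk1)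
  have hint : IntervalIntegrable
      (fun z => (1 - z) * ∫ y in (0 : ℝ)..z, ∫ x in (0 : ℝ)..y, ar1Integrand k z y x)
      volume 0 1 := by
    refine .of_continuousOn_Ioo_of_norm_le zero_le_one
      ((continuousOn_const.sub continuousOn_id).mul (hG.mono Ioo_subset_Ioi_self))
      (C := π / 2) fun z ⟨hz0, hz1⟩ => ?_
    have := norm_iteratedIntegral_le hz0.le (norm_ar1Integrand_le k)
    rw [norm_mul, Real.norm_of_nonneg (by linarith)]
    have hzz : z * z ≤ 1 := by nlinarith
    calc (1 - z) * ‖_‖ ≤ 1 * (π / 2 * z * z) := by gcongr; linarith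
      _ ≤ π / 2 := by nlinarith [pi_pos]
  refine intervalIntegral_pos_of_pos_on hint (fun z ⟨hz0, hz1⟩ => ?_) one_pos
  refine mul_pos (by linarith) (iteratedIntegral_pos hz0 ?_ fun y x _ hxy _ =>
    ar1Integrand_pos hk0 hk1 hz0 hxy)
  exact continuous_iff_continuousAt.2 fun q =>
    (continuousAt_ar1Integrand hk0 hk1 (z, q) hz0).comp (by fun_prop)
end
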